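/- Creation and annihilation operators are partially adjoint with respect to ⟨·|·⟩: for words w0, w1 in {x,y} and valid indices i, ⟨a_{x,i} w0 | w1⟩ = ⟨w0 | a*_{x,i} w1⟩ and ⟨w0 | a_{y,i} w1⟩ = ⟨a*_{y,i} w0 | w1⟩, where a value of 0 (from a terminal annihilation failing) gives 0 in the form. -/

import Mathlib

open scoped Classical

/-- Words over the two-letter alphabet {x,y}; `false` is `x`, `true` is `y`. -/
abbrev Word := List Bool

/-- 0-indexed positions of the x's (`false`) in a word. -/
def xIdx (w : Word) : List ℕ :=
  (List.range w.length).filter (fun j => w.getD j true = false)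

/-- 0-indexed positions of the y's (`true`) in a word. -/
def yIdx (w : Word) : List ℕ :=
  (List.range w.length).filter (fun j => w.getD j false = true)

/-- `fX w i` = number of y's strictly left of the i-th x of `w` (i is 0-indexed). -/
def fX (w : Word) (i : ℕ) : ℕ := (xIdx w).getD i 0 - i

/-- `fY w j` = number of x's strictly left of the j-th y of `w` (j is 0-indexed). -/
def fY (w : Word) (j : ℕ) : ℕ := (yIdx w).getD j 0 - j

/-- `hX w i` = (1-indexed) position of the i-th x of `w` (i is 0-indexed). -/
def hX (w : Word) (i : ℕ) : ℕ := (xIdx w).getD i 0 + 1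

/-- The pawn-move partial order: same letter counts, and each x of `w0` lies at a
position at most that of the corresponding x of `w1`. -/
def wle (w0 w1 : Word) : Prop :=
  w0.count false = w1.count false ∧ w0.count true = w1.count true ∧
  ∀ i < w0.count false, (xIdx w0).getD i 0 ≤ (xIdx w1).getD i 0

/-- Creation operator `a*_{s,i}` on words: `i = 0` prepends `s`; `1 ≤ i ≤ n_s`
replaces the i-th `s` by `ss`; `i = n_s + 1` appends `s`. -/
def create (s : Bool) : ℕ → Word → Word
  | 0, w => s :: w
  | _+1, [] => [s]
  | i+1, a :: w =>
    if a = s then (if i = 0 then s :: s :: w else a :: create s i w)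
    else a :: create s (i+1) w

/-- Delete the i-th occurrence (1-indexed) of `s`. -/
def delNth (s : Bool) : ℕ → Word → Word
  | _, [] => []
  | i, a :: w => if a = s then (if i ≤ 1 then w else a :: delNth s (i-1) w)
                 else a :: delNth s i w

/-- Annihilation operator `a_{s,i}` on words: `i = 0` deletes an initial `s` (else 0);
`1 ≤ i ≤ n_s` deletes the i-th `s`; `i = n_s + 1` deletes a final `s` (else 0). -/
def annih (s : Bool) (i : ℕ) (w : Word) : Option Word :=
  if i = 0 then
    match w with
    | a :: t => if a = s then some t else none
    | [] => none
  else if i ≤ w.count s then some (delNth s i w)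
  else if i = w.count s + 1 then
    if w.getLast? = some s then some w.dropLast else none
  else none

/-- The free ℤ-module on words: the Fock space `F`. -/
abbrev FS := Word →₀ ℤ

/-- Basis vector of a word. -/
noncomputable def δ (w : Word) : FS := Finsupp.single w 1

/-- `0` for `none`, basis vector for `some`. -/
noncomputable def optδ (o : Option Word) : FS := o.elim 0 δ

/-- Extend a word-indexed family of vectors to a linear map on `FS`. -/
noncomputable def opOf (g : Word → FS) : FS →ₗ[ℤ] FS := Finsupp.lift FS ℤ Word g

/-- Creation operator as a linear map. -/
noncomputable def Cr (s : Bool) (i : ℕ) : FS →ₗ[ℤ] FS := opOf (fun w => δ (create s i w))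

/-- Annihilation operator as a linear map. -/
noncomputable def An (s : Bool) (i : ℕ) : FS →ₗ[ℤ] FS := opOf (fun w => optδ (annih s i w))

/-- Boolean bilinear form on words: `1` if `w0 ≤ w1` in the pawn-move order, else `0`. -/
noncomputable def pairW (w0 w1 : Word) : ℤ := if wle w0 w1 then 1 else 0

/-- Bilinear extension of `pairW` to the free module. -/
noncomputable def pairF (u v : FS) : ℤ :=
  u.sum fun w0 a => v.sum fun w1 b => a * b * pairW w0 w1

/-- Kronecker delta form on words. -/
noncomputable def dotW (w0 w1 : Word) : ℤ := if w0 = w1 then 1 else 0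

/-- Bilinear extension of `dotW`: words form an orthonormal basis. -/
noncomputable def dotF (u v : FS) : ℤ :=
  u.sum fun w0 a => v.sum fun w1 b => a * b * dotW w0 w1

/-- All words of a given length. -/
noncomputable def wordsOfLen (n : ℕ) : Finset Word :=
  (Finset.univ : Finset (Fin n → Bool)).image List.ofFn

/-- Swap `xy → yx` at the x's whose (0-indexed) number lies in `T`;
the counter `k` records how many x's have been passed. -/
def psiX (T : Finset ℕ) : Word → ℕ → Word
  | [], _ => []
  | false :: true :: w, k =>
      if k ∈ T then true :: false :: psiX T w (k+1)
      else false :: psiX T (true :: w) (k+1)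
  | false :: w, k => false :: psiX T w (k+1)
  | true :: w, k => true :: psiX T w k
  termination_by w _ => w.length
  decreasing_by all_goals (simp <;> omega)

/-- Swap `yx → xy` at the y's whose (0-indexed) number lies in `T`. -/
def psiY (T : Finset ℕ) : Word → ℕ → Word
  | [], _ => []
  | true :: false :: w, k =>
      if k ∈ T then false :: true :: psiY T w (k+1)
      else true :: psiY T (false :: w) (k+1)
  | true :: w, k => true :: psiY T w (k+1)
  | false :: w, k => false :: psiY T w k
  termination_by w _ => w.length
  decreasing_by all_goals (simp <;> omega)

/-- `Ex w`: 0-indexed numbers of the x's of `w` immediately followed by a y. -/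
noncomputable def Ex (w : Word) : Finset ℕ :=
  (Finset.range (w.count false)).filter
    (fun i => w.getD ((xIdx w).getD i 0 + 1) false = true)

/-- `Ey w`: 0-indexed numbers of the y's of `w` immediately followed by an x. -/
noncomputable def Ey (w : Word) : Finset ℕ :=
  (Finset.range (w.count true)).filter
    (fun i => w.getD ((yIdx w).getD i 0 + 1) true = false)

/-!
Written as prefix counts, `w0 ≤ w1` says that the two words have the same letter counts and that
every prefix of `w0` contains at least as many x's as the prefix of `w1` of the same length. In
that form the order obeys two recursion rules: `x :: u ≤ v` iff `u ≤ v'`, where `v'` is `v` with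
its first x erased, and `y :: u ≤ v` iff `v = y :: v'` with `u ≤ v'`. An induction on `w0` along
these rules shows that deleting the i-th x of `w0` and doubling the i-th x of `w1` are
interchangeable. Exchanging the letters x ↔ y reverses the order and turns the claim for y into
the claim for x.
-/

lemma xIdx_cons (a : Bool) (w : Word) :
    xIdx (a :: w) = (if a = false then [0] else []) ++ (xIdx w).map (· + 1) := by
  rw [xIdx, List.length_cons, List.range_succ_eq_map, List.filter_cons, List.filter_map]
  have : ((fun j => decide ((a :: w).getD j true = false)) ∘ Nat.succ)
      = fun j => decide (w.getD j true = false) := by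
    funext j; simp
  rw [this]
  cases a <;> rfl

lemma length_xIdx (w : Word) : (xIdx w).length = w.count false := by
  induction w with
  | nil => rfl
  | cons a w ih => cases a <;> simp [xIdx_cons, ih]

lemma getD_map_add_one {l : List ℕ} {j : ℕ} (hj : j < l.length) :
    (l.map (· + 1)).getD j 0 = l.getD j 0 + 1 := by
  rw [List.getD_eq_getElem _ _ (by simpa using hj), List.getD_eq_getElem _ _ hj,
    List.getElem_map]

lemma xIdx_getD_lt_iff {w : Word} {j : ℕ} (hj : j < w.count false) (c : ℕ) :
    (xIdx w).getD j 0 < c ↔ j < (w.take c).count false := by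
  induction w generalizing j c with
  | nil => simp at hj
  | cons a w ih =>
    cases c with
    | zero => simp
    | succ c =>
      cases a
      · cases j with
        | zero => simp [xIdx_cons]
        | succ j =>
          have hj' : j < w.count false := by simpa using hj
          rw [xIdx_cons, if_pos rfl, List.singleton_append, List.getD_cons_succ,
            getD_map_add_one (by rwa [length_xIdx]), List.take_succ_cons, List.count_cons_self]
          have := ih hj' c
          omega
      · have hj' : j < w.count false := by simpa using hj
        rw [xIdx_cons, if_neg Bool.true_eq_false.mp, List.nil_append,
          getD_map_add_one (by rwa [length_xIdx]), List.take_succ_cons,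
          List.count_cons_of_ne Bool.true_eq_false.mp]
        have := ih hj' c
        omega

lemma wle_iff_count_take {u v : Word} : wle u v ↔ u.count false = v.count false ∧
    u.count true = v.count true ∧ ∀ c, (v.take c).count false ≤ (u.take c).count false := by
  refine and_congr_right fun hf => and_congr_right fun _ => ⟨fun h c => ?_, fun h j hj => ?_⟩
  · by_contra! hlt
    have hk : (u.take c).count false < u.count false :=
      hf ▸ hlt.trans_le ((List.take_sublist c v).count_le _)
    have := (xIdx_getD_lt_iff (hf ▸ hk) c).2 hlt
    have := (xIdx_getD_lt_iff hk c).1 (by have := h _ hk; omega)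
    omega
  · have := (xIdx_getD_lt_iff (hf ▸ hj) ((xIdx v).getD j 0 + 1)).1 (by omega)
    have := (xIdx_getD_lt_iff hj ((xIdx v).getD j 0 + 1)).2
      (this.trans_le (h _))
    omega

lemma wle_cons_cons_iff (a : Bool) (u v : Word) : wle (a :: u) (a :: v) ↔ wle u v := by
  simp only [wle_iff_count_take, List.count_cons]
  refine and_congr (by simp) (and_congr (by simp) ⟨fun h c => ?_, fun h c => ?_⟩)
  · simpa [List.take_succ_cons, List.count_cons] using h (c + 1)
  · cases c <;> simp [List.take_succ_cons, List.count_cons, h]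

lemma not_wle_true_cons_false_cons (u v : Word) : ¬ wle (true :: u) (false :: v) := fun h => by
  simpa using (wle_iff_count_take.1 h).2.2 1

lemma not_wle_of_length_ne {u v : Word} (h : u.length ≠ v.length) : ¬ wle u v := fun hw =>
  h (by rw [← List.count_false_add_count_true, ← List.count_false_add_count_true, hw.1, hw.2.1])

lemma count_take_erase (s : Bool) (v : Word) (c : ℕ) :
    ((v.erase s).take c).count s = (v.take (c + 1)).count s - 1 := by
  induction v generalizing c with
  | nil => simp
  | cons a v ih =>
    by_cases h : a = s
    · simp [h, List.take_succ_cons]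
    · cases c <;> simp [h, List.take_succ_cons, List.count_cons_of_ne h, ih]

/-- The leading x of the smaller word is matched with the first x of the larger one. -/
lemma wle_false_cons_iff (u v : Word) :
    wle (false :: u) v ↔ 1 ≤ v.count false ∧ wle u (v.erase false) := by
  simp only [wle_iff_count_take, List.count_erase, count_take_erase, List.count_cons_self,
    List.count_cons_of_ne Bool.false_ne_true, beq_self_eq_true, if_true]
  constructor
  · rintro ⟨hf, ht, h⟩
    refine ⟨by omega, by omega, by simpa using ht, fun c => ?_⟩
    simpa [List.take_succ_cons] using h (c + 1)
  · rintro ⟨hv, hf, ht, h⟩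
    refine ⟨by omega, by simpa using ht, fun c => ?_⟩
    cases c with
    | zero => simp
    | succ c => have := h c; simp [List.take_succ_cons]; omega

lemma count_create_self (s : Bool) (i : ℕ) (w : Word) :
    (create s i w).count s = w.count s + 1 := by
  induction w generalizing i with
  | nil => cases i <;> simp [create]
  | cons a w ih =>
    cases i with
    | zero => simp [create]
    | succ i =>
      simp only [create]
      split_ifs <;> simp [*]

lemma erase_create_one (s : Bool) (w : Word) : (create s 1 w).erase s = w := by
  induction w with
  | nil => simp [create]
  | cons a w ih => by_cases h : a = s <;> simp [create, h, ih]

lemma erase_create {s : Bool} {w : Word} (hw : 1 ≤ w.count s) {i : ℕ} (hi : 2 ≤ i) :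
    (create s i w).erase s = create s (i - 1) (w.erase s) := by
  obtain ⟨i, rfl⟩ := Nat.exists_eq_add_of_le' hi
  induction w with
  | nil => simp at hw
  | cons a w ih =>
    by_cases h : a = s
    · subst h; simp [create]
    · simp [create, h, ih (by simpa [List.count_cons, h] using hw)]

theorem wle_delNth_iff_wle_create {w0 : Word} {i : ℕ} (hi1 : 1 ≤ i) (hi : i ≤ w0.count false)
    (w1 : Word) : wle (delNth false i w0) w1 ↔ wle w0 (create false i w1) := by
  induction w0 generalizing i w1 with
  | nil => simp at hi; omega
  | cons a t ih =>
    obtain ⟨i, rfl⟩ := Nat.exists_eq_add_of_le' hi1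
    cases a
    · rw [wle_false_cons_iff t]
      rcases Nat.eq_zero_or_pos i with rfl | hi0
      · simp [delNth, count_create_self, erase_create_one]
      · have hit : i ≤ t.count false := by simpa using hi
        rw [show delNth false (i + 1) (false :: t) = false :: delNth false i t by
          simp [delNth]; omega, wle_false_cons_iff]
        by_cases hw1 : 1 ≤ w1.count false
        · rw [erase_create hw1 (by omega), Nat.add_sub_cancel, ih hi0 hit]
          simp [hw1, count_create_self]
        · refine iff_of_false (fun h => hw1 h.1) fun h => hw1 ?_
          have := h.2.1
          simp [count_create_self] at this
          omega
    · have hit : i + 1 ≤ t.count false := by simpa using hi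
      rw [show delNth false (i + 1) (true :: t) = true :: delNth false (i + 1) t from rfl]
      rcases w1 with _ | ⟨_ | _, s⟩
      · exact iff_of_false (not_wle_of_length_ne (by simp))
          (by simpa [create] using not_wle_true_cons_false_cons t [])
      · refine iff_of_false (not_wle_true_cons_false_cons _ s) ?_
        rcases i with _ | i <;> exact not_wle_true_cons_false_cons t _
      · rw [show create false (i + 1) (true :: s) = true :: create false (i + 1) s from rfl,
          wle_cons_cons_iff, wle_cons_cons_iff, ih (by omega) hit]

lemma create_zero (s : Bool) (w : Word) : create s 0 w = s :: w := by
  cases w <;> rfl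

lemma annih_of_pos {s : Bool} {i : ℕ} {w : Word} (hi0 : 0 < i) (hi : i ≤ w.count s) :
    annih s i w = some (delNth s i w) := by
  simp [annih, hi0.ne', hi]

theorem annih_false_elim_pairW {w0 : Word} {i : ℕ} (hi : i ≤ w0.count false) (w1 : Word) :
    (annih false i w0).elim 0 (fun u => pairW u w1) = pairW w0 (create false i w1) := by
  rcases Nat.eq_zero_or_pos i with rfl | hi0
  · rw [create_zero]
    rcases w0 with _ | ⟨_ | _, t⟩
    · simp [annih, pairW, not_wle_of_length_ne]
    · simp [annih, pairW, wle_cons_cons_iff]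
    · simp [annih, pairW, not_wle_true_cons_false_cons]
  · simp [annih_of_pos hi0 hi, pairW, wle_delNth_iff_wle_create hi0 hi]

def swapLetters (w : Word) : Word := w.map (!·)

@[simp]
lemma count_swapLetters (b : Bool) (w : Word) : (swapLetters w).count b = w.count (!b) := by
  induction w with
  | nil => rfl
  | cons a w ih => cases a <;> cases b <;> simp_all [swapLetters]

lemma count_take_swapLetters (b : Bool) (c : ℕ) (w : Word) :
    ((swapLetters w).take c).count b = min c w.length - (w.take c).count b := by
  rw [swapLetters, ← List.map_take, ← swapLetters, count_swapLetters, ← List.length_take,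
    ← List.count_not_add_count _ b]
  omega

lemma wle_swapLetters_iff {u v : Word} : wle (swapLetters v) (swapLetters u) ↔ wle u v := by
  simp only [wle_iff_count_take, count_swapLetters, count_take_swapLetters, Bool.not_false,
    Bool.not_true]
  refine ⟨fun ⟨ht, hf, h⟩ => ⟨hf.symm, ht.symm, fun c => ?_⟩,
    fun ⟨hf, ht, h⟩ => ⟨ht.symm, hf.symm, fun c => ?_⟩⟩
  all_goals
    have hl : u.length = v.length := by
      rw [← List.count_false_add_count_true, ← List.count_false_add_count_true]; omega
    have := h c
    have := List.count_le_length (a := false) (l := u.take c)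
    have := List.count_le_length (a := false) (l := v.take c)
    rw [List.length_take] at *
    omega

lemma swapLetters_delNth (s : Bool) (i : ℕ) (w : Word) :
    swapLetters (delNth s i w) = delNth (!s) i (swapLetters w) := by
  induction w generalizing i with
  | nil => rfl
  | cons a w ih =>
    simp only [swapLetters] at ih ⊢
    by_cases h : a = s <;> by_cases hi : i ≤ 1 <;> simp [delNth, h, hi, ih]

lemma swapLetters_create (s : Bool) (i : ℕ) (w : Word) :
    swapLetters (create s i w) = create (!s) i (swapLetters w) := by
  induction w generalizing i with
  | nil => cases i <;> simp [create, swapLetters]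
  | cons a w ih =>
    simp only [swapLetters] at ih ⊢
    rcases i with _ | i
    · simp [create]
    · by_cases h : a = s <;> by_cases hi : i = 0 <;> simp [create, h, hi, ih]

lemma annih_swapLetters (s : Bool) (i : ℕ) (w : Word) :
    annih (!s) i (swapLetters w) = (annih s i w).map swapLetters := by
  rcases Nat.eq_zero_or_pos i with rfl | hi0
  · rcases w with _ | ⟨a, w⟩ <;> simp [annih, swapLetters]
  · simp only [annih, hi0.ne', if_false, count_swapLetters, Bool.not_not]
    split_ifs
    · simp [swapLetters_delNth]
    all_goals simp_all [swapLetters, List.getLast?_map, List.map_dropLast]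

lemma pairW_swapLetters (u v : Word) : pairW (swapLetters v) (swapLetters u) = pairW u v := by
  simp [pairW, wle_swapLetters_iff]

theorem annih_true_elim_pairW (w0 : Word) {w1 : Word} {i : ℕ} (hi : i ≤ w1.count true) :
    (annih true i w1).elim 0 (fun u => pairW w0 u) = pairW (create true i w0) w1 := by
  have h := annih_false_elim_pairW (w0 := swapLetters w1) (i := i) (by simpa using hi)
    (swapLetters w0)
  -- read both `false`s in `h` as `!true`
  rw [← Bool.not_true, annih_swapLetters, ← swapLetters_create, pairW_swapLetters] at h
  rw [← h]
  cases annih true i w1 <;> simp [pairW_swapLetters]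

/-- Partial adjointness of creation and annihilation:
`⟨a_{x,i} w0 | w1⟩ = ⟨w0 | a*_{x,i} w1⟩` for `0 ≤ i ≤ n_x(w0)`, and
`⟨w0 | a_{y,i} w1⟩ = ⟨a*_{y,i} w0 | w1⟩` for `0 ≤ i ≤ n_y(w1)`;
a failed terminal annihilation contributes `0`. -/
theorem stmt8 (w0 w1 : Word) :
    (∀ i ≤ w0.count false,
      (annih false i w0).elim 0 (fun u => pairW u w1)
        = pairW w0 (create false i w1)) ∧
    (∀ i ≤ w1.count true,
      (annih true i w1).elim 0 (fun u => pairW w0 u)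
        = pairW (create true i w0) w1) :=
  ⟨fun _ hi => annih_false_elim_pairW hi w1, fun _ hi => annih_true_elim_pairW w0 hi⟩
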